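/- Let L be symmetric positive definite, J' ⊆ {1,...,N}, i ∈ J', and k ∉ J'. Then ((L_{J'})^{-1})_{ii} ≤ ((L_{J'∪{k}})^{-1})_{ii}. That is, the diagonal entries of inverses of principal submatrices are monotone non-decreasing in the index set. -/

import Mathlib

open Matrix

noncomputable def subm {N : ℕ} (L : Matrix (Fin N) (Fin N) ℝ) (J : Finset (Fin N)) :
    Matrix J J ℝ :=
  L.submatrix (fun i => (i : Fin N)) (fun j => (j : Fin N))

/-- Zero-extension of a vector indexed by a finset. -/
noncomputable def extv {N : ℕ} (J : Finset (Fin N)) (x : J → ℝ) : Fin N → ℝ :=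
  fun j => if h : j ∈ J then x ⟨j, h⟩ else 0

lemma quad_eq {N : ℕ} (L : Matrix (Fin N) (Fin N) ℝ) (J : Finset (Fin N)) (x : J → ℝ) :
    x ⬝ᵥ (subm L J *ᵥ x) = (extv J x) ⬝ᵥ (L *ᵥ extv J x) := by
  have hx : ∀ a : J, x a = extv J x (a : Fin N) := fun a => by simp [extv]
  have hinner : ∀ a : Fin N,
      (∑ b : J, L a (b : Fin N) * extv J x (b : Fin N)) = ∑ b ∈ J, L a b * extv J x b :=
    fun a => Finset.sum_coe_sort J (fun b => L a b * extv J x b)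
  simp only [dotProduct, mulVec, subm, submatrix_apply]
  simp only [hx, hinner]
  rw [Finset.sum_coe_sort J (fun a => extv J x a * ∑ b ∈ J, L a b * extv J x b)]
  rw [show (∑ a : Fin N, extv J x a * ∑ b : Fin N, L a b * extv J x b)
      = ∑ a ∈ J, extv J x a * ∑ b : Fin N, L a b * extv J x b from
    (Finset.sum_subset (Finset.subset_univ J) (fun a _ ha => by simp [extv, ha])).symm]
  refine Finset.sum_congr rfl fun a _ => ?_
  congr 1
  exact (Finset.sum_subset (Finset.subset_univ J) (fun b _ hb => by simp [extv, hb]))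

lemma subm_posDef {N : ℕ} {L : Matrix (Fin N) (Fin N) ℝ} (hL : L.PosDef)
    (J : Finset (Fin N)) : (subm L J).PosDef := by
  refine posDef_iff_dotProduct_mulVec.mpr ⟨?_, ?_⟩
  · ext a b
    have h := congrFun (congrFun hL.1 (b : Fin N)) (a : Fin N)
    simp only [conjTranspose_apply, star_trivial] at h ⊢
    simpa [subm] using h.symm
  · intro x hx
    rw [star_trivial, quad_eq]
    have hext : extv J x ≠ 0 := by
      intro h
      apply hx
      funext j
      have := congrFun h (j : Fin N)
      simpa [extv, j.2] using this
    simpa [star_trivial] using hL.dotProduct_mulVec_pos hext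

/-- Variational bound: `2 x_i - xᵀ M x ≤ (M⁻¹)_{ii}` for `M` positive definite. -/
lemma var_bound {n : Type*} [Fintype n] [DecidableEq n] {M : Matrix n n ℝ}
    (hM : M.PosDef) (i : n) (x : n → ℝ) :
    2 * x i - x ⬝ᵥ (M *ᵥ x) ≤ M⁻¹ i i := by
  have hdet : IsUnit M.det := isUnit_iff_ne_zero.mpr hM.det_pos.ne'
  have hMt : Mᵀ = M := by
    ext a b; simpa using congrFun (congrFun hM.1 a) b
  set u : n → ℝ := M⁻¹ *ᵥ Pi.single i 1 with hu
  have hMu : M *ᵥ u = Pi.single i 1 := by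
    rw [hu, mulVec_mulVec, Matrix.mul_nonsing_inv _ hdet, one_mulVec]
  have hui : u i = M⁻¹ i i := by simp [hu, mulVec, Pi.single_apply]
  have hpsd := hM.posSemidef.dotProduct_mulVec_nonneg (x - u)
  rw [star_trivial] at hpsd
  have hexp : (x - u) ⬝ᵥ (M *ᵥ (x - u))
      = x ⬝ᵥ (M *ᵥ x) - x ⬝ᵥ (M *ᵥ u) - u ⬝ᵥ (M *ᵥ x) + u ⬝ᵥ (M *ᵥ u) := by
    simp only [mulVec_sub, dotProduct_sub, sub_dotProduct]
    ring
  have hsym : u ⬝ᵥ (M *ᵥ x) = (M *ᵥ u) ⬝ᵥ x := by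
    rw [dotProduct_mulVec, ← mulVec_transpose, hMt]
  have h1 : x ⬝ᵥ (M *ᵥ u) = x i := by simp [hMu, dotProduct, Pi.single_apply]
  have h2 : u ⬝ᵥ (M *ᵥ x) = x i := by
    rw [hsym, hMu]; simp [dotProduct, Pi.single_apply]
  have h3 : u ⬝ᵥ (M *ᵥ u) = M⁻¹ i i := by
    rw [hMu, ← hui]; simp [dotProduct, Pi.single_apply]
  rw [hexp, h1, h2, h3] at hpsd
  linarith

/-- Attainment: `(M⁻¹)_{ii} = 2 u_i - uᵀ M u` at `u = M⁻¹ e_i`. -/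
lemma var_attain {n : Type*} [Fintype n] [DecidableEq n] {M : Matrix n n ℝ}
    (hM : M.PosDef) (i : n) :
    2 * (M⁻¹ *ᵥ Pi.single i 1) i - (M⁻¹ *ᵥ Pi.single i 1) ⬝ᵥ (M *ᵥ (M⁻¹ *ᵥ Pi.single i 1))
      = M⁻¹ i i := by
  have hdet : IsUnit M.det := isUnit_iff_ne_zero.mpr hM.det_pos.ne'
  set u : n → ℝ := M⁻¹ *ᵥ Pi.single i 1 with hu
  have hMu : M *ᵥ u = Pi.single i 1 := by
    rw [hu, mulVec_mulVec, Matrix.mul_nonsing_inv _ hdet, one_mulVec]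
  have hui : u i = M⁻¹ i i := by simp [hu, mulVec, Pi.single_apply]
  rw [hMu]
  have : u ⬝ᵥ Pi.single i 1 = u i := by simp [dotProduct, Pi.single_apply]
  rw [this, hui]
  ring

/-- For `L` positive definite, the diagonal entries of inverses of principal
submatrices are monotone non-decreasing in the index set:
`((L_{J'})⁻¹)_{ii} ≤ ((L_{J'∪{k}})⁻¹)_{ii}` for `i ∈ J'`, `k ∉ J'`. -/
theorem inverse_diag_monotone {N : ℕ} (L : Matrix (Fin N) (Fin N) ℝ)
    (hL : L.PosDef) (J' : Finset (Fin N)) (i k : Fin N)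
    (hi : i ∈ J') (hk : k ∉ J') :
    (subm L J')⁻¹ ⟨i, hi⟩ ⟨i, hi⟩
      ≤ (subm L (insert k J'))⁻¹ ⟨i, Finset.mem_insert_of_mem hi⟩
          ⟨i, Finset.mem_insert_of_mem hi⟩ := by
  set A := subm L J' with hA
  set M := subm L (insert k J') with hM
  have hApd : A.PosDef := subm_posDef hL J'
  have hMpd : M.PosDef := subm_posDef hL (insert k J')
  set i0 : {x // x ∈ J'} := ⟨i, hi⟩ with hi0
  set i1 : {x // x ∈ insert k J'} := ⟨i, Finset.mem_insert_of_mem hi⟩ with hi1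
  set w : {x // x ∈ J'} → ℝ := A⁻¹ *ᵥ Pi.single i0 1 with hw
  set x : {x // x ∈ insert k J'} → ℝ := fun j => extv J' w (j : Fin N) with hx
  have hext_eq : extv (insert k J') x = extv J' w := by
    funext j
    by_cases hj : j ∈ insert k J'
    · simp only [extv, hj, dif_pos]
      rfl
    · have hj' : j ∉ J' := fun h => hj (Finset.mem_insert_of_mem h)
      simp [extv, hj, hj']
  have hxw : x i1 = w i0 := by simp [hx, hi1, hi0, extv, hi]
  have hquad : x ⬝ᵥ (M *ᵥ x) = w ⬝ᵥ (A *ᵥ w) := by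
    rw [hM, hA, quad_eq, quad_eq, hext_eq]
  calc A⁻¹ i0 i0 = 2 * w i0 - w ⬝ᵥ (A *ᵥ w) := (var_attain hApd i0).symm
    _ = 2 * x i1 - x ⬝ᵥ (M *ᵥ x) := by rw [hxw, hquad]
    _ ≤ M⁻¹ i1 i1 := var_bound hMpd i1 x
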